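/- Under the map φ: H^n → H^k × ℝ × S^{2N+1} given by the identity on (t, x_1, y_1, …, x_k, y_k) together with s = ln|ẑ|, (ξ_j, η_j) = (x_{k+j}, y_{k+j})/|ẑ| for j=1,…,N+1 (where ẑ = (z_{k+1},…,z_n) ≠ 0), the pullback of the standard Heisenberg contact form satisfies (φ^{-1})^* θ_{H^n} = θ_{H^k} + 2e^{2s} θ_{S^{2N+1}} = 2e^{2s} θ_{k,N}. -/

import Mathlib

noncomputable section

/-- Points of the Heisenberg group `H^m ≅ ℝ × ℝ^m × ℝ^m`, coordinates `(t, x, y)`. -/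
abbrev HeisPt (m : ℕ) := ℝ × (Fin m → ℝ) × (Fin m → ℝ)

/-- The standard contact form `θ_{H^m} = dt + 2 Σ_j (x_j dy_j − y_j dx_j)` on `H^m`,
evaluated at the point `p` on the tangent vector `v`. -/
def thetaH (m : ℕ) (p v : HeisPt m) : ℝ :=
  v.1 + 2 * ∑ j, (p.2.1 j * v.2.2 j - p.2.2 j * v.2.1 j)

/-- The standard contact form `θ_{S^{2m-1}} = Σ_j (ξ_j dη_j − η_j dξ_j)` (on the ambient
`ℝ^m × ℝ^m` with coordinates `(ξ, η)`), evaluated at `p` on `v`. -/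
def thetaS (m : ℕ) (p v : (Fin m → ℝ) × (Fin m → ℝ)) : ℝ :=
  ∑ j, (p.1 j * v.2 j - p.2 j * v.1 j)

/-- `H^n` with `n = k + N + 1` presented with split coordinates: an `H^k` factor `(t, x, y)`
together with the coordinates `ẑ = (X, Y) ∈ ℝ^{N+1} × ℝ^{N+1}`. -/
abbrev HeisSplit (k N : ℕ) := HeisPt k × (Fin (N + 1) → ℝ) × (Fin (N + 1) → ℝ)

/-- The standard contact form of `H^n` in the split coordinates:
`θ_{H^n} = θ_{H^k} + 2 Σ_j (X_j dY_j − Y_j dX_j)`. -/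
def thetaHn (k N : ℕ) (p v : HeisSplit k N) : ℝ :=
  thetaH k p.1 v.1 + 2 * thetaS (N + 1) p.2 v.2

/-- The product manifold `M = H^k × ℝ × S^{2N+1}` (with the sphere sitting in
`ℝ^{N+1} × ℝ^{N+1}`), coordinates `(t, x, y, s, ξ, η)`. -/
abbrev ProdM (k N : ℕ) := HeisPt k × ℝ × (Fin (N + 1) → ℝ) × (Fin (N + 1) → ℝ)

/-- The contact form `θ_{k,N} = θ_{S^{2N+1}} + (e^{-2s}/2) θ_{H^k}` on `M`. -/
def thetaKN (k N : ℕ) (p v : ProdM k N) : ℝ :=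
  thetaS (N + 1) p.2.2 v.2.2 + (Real.exp (-(2 * p.2.1)) / 2) * thetaH k p.1 v.1

/-- The inverse `φ^{-1}` of the polar-coordinate map `φ`:
`(t, x, y, s, ξ, η) ↦ (t, x, y, e^s ξ, e^s η)`. -/
def phiInv (k N : ℕ) (p : ProdM k N) : HeisSplit k N :=
  (p.1, (Real.exp p.2.1 • p.2.2.1, Real.exp p.2.1 • p.2.2.2))

/-- The pullback of the standard Heisenberg contact form under `φ^{-1}` satisfies
`(φ^{-1})^* θ_{H^n} = θ_{H^k} + 2 e^{2s} θ_{S^{2N+1}} = 2 e^{2s} θ_{k,N}`. -/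
theorem pullback_thetaHn (k N : ℕ) (p v : ProdM k N) :
    thetaHn k N (phiInv k N p) (fderiv ℝ (phiInv k N) p v)
        = thetaH k p.1 v.1 + 2 * Real.exp (2 * p.2.1) * thetaS (N + 1) p.2.2 v.2.2 ∧
      thetaH k p.1 v.1 + 2 * Real.exp (2 * p.2.1) * thetaS (N + 1) p.2.2 v.2.2
        = 2 * Real.exp (2 * p.2.1) * thetaKN k N p v := by

  have hs : HasFDerivAt (fun p : ProdM k N => p.2.1)
      ((ContinuousLinearMap.fst ℝ ℝ ((Fin (N+1) → ℝ) × (Fin (N+1) → ℝ))).comp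
        (ContinuousLinearMap.snd ℝ (HeisPt k) (ℝ × (Fin (N+1) → ℝ) × (Fin (N+1) → ℝ)))) p :=
    (hasFDerivAt_fst).comp p (hasFDerivAt_snd)
  have hxi : HasFDerivAt (fun p : ProdM k N => p.2.2.1)
      ((ContinuousLinearMap.fst ℝ (Fin (N+1) → ℝ) (Fin (N+1) → ℝ)).comp
        ((ContinuousLinearMap.snd ℝ ℝ ((Fin (N+1) → ℝ) × (Fin (N+1) → ℝ))).comp
          (ContinuousLinearMap.snd ℝ (HeisPt k) (ℝ × (Fin (N+1) → ℝ) × (Fin (N+1) → ℝ))))) p :=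
    (hasFDerivAt_fst).comp p ((hasFDerivAt_snd).comp p (hasFDerivAt_snd))
  have heta : HasFDerivAt (fun p : ProdM k N => p.2.2.2)
      ((ContinuousLinearMap.snd ℝ (Fin (N+1) → ℝ) (Fin (N+1) → ℝ)).comp
        ((ContinuousLinearMap.snd ℝ ℝ ((Fin (N+1) → ℝ) × (Fin (N+1) → ℝ))).comp
          (ContinuousLinearMap.snd ℝ (HeisPt k) (ℝ × (Fin (N+1) → ℝ) × (Fin (N+1) → ℝ))))) p :=
    (hasFDerivAt_snd).comp p ((hasFDerivAt_snd).comp p (hasFDerivAt_snd))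
  have hexp := hs.exp
  have hX := hexp.smul hxi
  have hY := hexp.smul heta
  have hphi : HasFDerivAt (phiInv k N) _ p := HasFDerivAt.prodMk (hasFDerivAt_fst) (HasFDerivAt.prodMk hX hY)
  rw [hphi.fderiv]
  constructor
  · simp only [thetaHn, thetaH, thetaS, phiInv, ContinuousLinearMap.prod_apply,
      ContinuousLinearMap.add_apply, ContinuousLinearMap.coe_smul', Pi.smul_apply,
      ContinuousLinearMap.smulRight_apply, ContinuousLinearMap.coe_comp', Function.comp_apply,
      ContinuousLinearMap.coe_fst', ContinuousLinearMap.coe_snd', smul_eq_mul,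
      Pi.add_apply]
    congr 1
    rw [Finset.mul_sum, Finset.mul_sum]
    refine Finset.sum_congr rfl fun j _ => ?_
    rw [two_mul p.2.1, Real.exp_add]; ring
  · have h1 : Real.exp (2 * p.2.1) * Real.exp (-(2 * p.2.1)) = 1 := by
      rw [← Real.exp_add]; simp
    rw [thetaKN]
    linear_combination (-thetaH k p.1 v.1) * h1
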